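/- arXiv:2310.05466 — 3 statements merged into one kernel-verified Lean document; each statement's English description precedes it below -/
import Mathlib

section
/- Let f : ℝ_{>0}^n → ℝ, f(x) = ∑_{μ ∈ σ(f)} c_μ x^μ be a signomial, and assume there exists v ∈ ℝ^n such that σ(f) ⊆ N(f)_v ∪ N(f)_{-v}. Consider the bipartite graph whose vertex set is the disjoint union of the sets of connected components of f|_{N(f)_v}^{-1}(ℝ_{<0}) and of f|_{N(f)_{-v}}^{-1}(ℝ_{<0}), with an edge between a component U of f|_{N(f)_v}^{-1}(ℝ_{<0}) and a component V of f|_{N(f)_{-v}}^{-1}(ℝ_{<0}) whenever U ∩ V ≠ ∅, and let D be the number of connected components of this graph. Then the number of connected components of f^{-1}(ℝ_{<0}) equals D, and D is at most the number of connected components of f|_{N(f)_v}^{-1}(ℝ_{<0}) plus the number of connected components of f|_{N(f)_{-v}}^{-1}(ℝ_{<0}). -/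
/-!
Write `f = g + h` with `g = f|_{N(f)_v}` and `h = f|_{N(f)_{-v}}`. Unless the support lies in a
single hyperplane (where `g = h = f`), the open sets `g⁻¹(ℝ_{<0})` and `h⁻¹(ℝ_{<0})` cover
`f⁻¹(ℝ_{<0})` and their intersection lies inside it. Along the curve `t ↦ t^v ⊙ x` the signomial
reads `t^a g(x) + t^b h(x)` with `b < a`, so as `t → ∞` every point of `g⁻¹(ℝ_{<0})` enters
`f⁻¹(ℝ_{<0})` for good without leaving its component of `g⁻¹(ℝ_{<0})`; hence each component of
`g⁻¹(ℝ_{<0})` meets `f⁻¹(ℝ_{<0})`, and only inside one of its components (symmetrically for `h`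
and `-v`). A component of `f⁻¹(ℝ_{<0})` is then the union of the traces of the components of the
two restrictions that it meets, and two such components meet the same component of `f⁻¹(ℝ_{<0})`
exactly when they are linked in the bipartite intersection graph.
-/

open Finset

/-- The signomial `x ↦ ∑_{μ ∈ S} c μ * x^μ` (with real exponents, via `Real.rpow`). -/
noncomputable def sig {n : ℕ} (S : Finset (Fin n → ℝ)) (c : (Fin n → ℝ) → ℝ)
    (x : Fin n → ℝ) : ℝ :=
  ∑ μ ∈ S, c μ * ∏ i, x i ^ μ i

open Classical in
/-- The restriction `f|_F` of the signomial to a subset `F ⊆ ℝⁿ` of exponent vectors. -/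
noncomputable def sigOn {n : ℕ} (S : Finset (Fin n → ℝ)) (c : (Fin n → ℝ) → ℝ)
    (F : Set (Fin n → ℝ)) (x : Fin n → ℝ) : ℝ :=
  ∑ μ ∈ S, if μ ∈ F then c μ * ∏ i, x i ^ μ i else 0

/-- `f⁻¹(ℝ_{<0})`: the points of the positive orthant where the signomial is negative. -/
def negSet {n : ℕ} (S : Finset (Fin n → ℝ)) (c : (Fin n → ℝ) → ℝ) : Set (Fin n → ℝ) :=
  {x | (∀ i, 0 < x i) ∧ sig S c x < 0}

/-- `(f|_F)⁻¹(ℝ_{<0})`. -/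
def negSetOn {n : ℕ} (S : Finset (Fin n → ℝ)) (c : (Fin n → ℝ) → ℝ)
    (F : Set (Fin n → ℝ)) : Set (Fin n → ℝ) :=
  {x | (∀ i, 0 < x i) ∧ sigOn S c F x < 0}

/-- `σ₊(f)`: the positive exponent vectors. -/
def sigPosExp {n : ℕ} (S : Finset (Fin n → ℝ)) (c : (Fin n → ℝ) → ℝ) : Set (Fin n → ℝ) :=
  {μ | μ ∈ S ∧ 0 < c μ}

/-- `σ₋(f)`: the negative exponent vectors. -/
def sigNegExp {n : ℕ} (S : Finset (Fin n → ℝ)) (c : (Fin n → ℝ) → ℝ) : Set (Fin n → ℝ) :=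
  {μ | μ ∈ S ∧ c μ < 0}

/-- The hyperplane `H_{v,a}`. -/
def Hyp {n : ℕ} (v : Fin n → ℝ) (a : ℝ) : Set (Fin n → ℝ) :=
  {μ | ∑ i, v i * μ i = a}

/-- The closed half-space `H⁺_{v,a}`. -/
def Hplus {n : ℕ} (v : Fin n → ℝ) (a : ℝ) : Set (Fin n → ℝ) :=
  {μ | a ≤ ∑ i, v i * μ i}

/-- The closed half-space `H⁻_{v,a}`. -/
def Hminus {n : ℕ} (v : Fin n → ℝ) (a : ℝ) : Set (Fin n → ℝ) :=
  {μ | ∑ i, v i * μ i ≤ a}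

/-- The open half-space `H^{+,∘}_{v,a}`. -/
def HplusO {n : ℕ} (v : Fin n → ℝ) (a : ℝ) : Set (Fin n → ℝ) :=
  {μ | a < ∑ i, v i * μ i}

/-- The open half-space `H^{-,∘}_{v,a}`. -/
def HminusO {n : ℕ} (v : Fin n → ℝ) (a : ℝ) : Set (Fin n → ℝ) :=
  {μ | ∑ i, v i * μ i < a}

/-- `U` is a connected component of `X` (a maximal nonempty preconnected subset of `X`). -/
def IsConnComp {n : ℕ} (X U : Set (Fin n → ℝ)) : Prop :=
  U.Nonempty ∧ U ⊆ X ∧ IsPreconnected U ∧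
    ∀ W, U ⊆ W → W ⊆ X → IsPreconnected W → W = U

/-- The number (cardinality) of connected components of `X`. -/
noncomputable def compCard {n : ℕ} (X : Set (Fin n → ℝ)) : Cardinal :=
  Cardinal.mk {U : Set (Fin n → ℝ) // IsConnComp X U}

/-- The face `N(f)_v` of the Newton polytope of a signomial with support `S`,
with outer normal vector `v`. -/
def faceOf {n : ℕ} (S : Finset (Fin n → ℝ)) (v : Fin n → ℝ) : Set (Fin n → ℝ) :=
  {ω ∈ convexHull ℝ (↑S : Set (Fin n → ℝ)) |
    ∀ μ ∈ convexHull ℝ (↑S : Set (Fin n → ℝ)), ∑ i, v i * μ i ≤ ∑ i, v i * ω i}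

section ConnComp

variable {n : ℕ} {X U V : Set (Fin n → ℝ)} {x : Fin n → ℝ}

theorem isConnComp_connectedComponentIn (hx : x ∈ X) :
    IsConnComp X (connectedComponentIn X x) :=
  ⟨⟨x, mem_connectedComponentIn hx⟩, connectedComponentIn_subset X x,
    isPreconnected_connectedComponentIn, fun _ hUW hWX hW =>
      (hW.subset_connectedComponentIn (hUW (mem_connectedComponentIn hx)) hWX).antisymm hUW⟩

theorem IsConnComp.eq_connectedComponentIn (hU : IsConnComp X U) (hx : x ∈ U) :
    U = connectedComponentIn X x :=
  (hU.2.2.2 _ (hU.2.2.1.subset_connectedComponentIn hx hU.2.1)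
    (connectedComponentIn_subset X x) isPreconnected_connectedComponentIn).symm

theorem IsConnComp.eq_of_mem (hU : IsConnComp X U) (hV : IsConnComp X V) (hxU : x ∈ U)
    (hxV : x ∈ V) : U = V :=
  (hU.eq_connectedComponentIn hxU).trans (hV.eq_connectedComponentIn hxV).symm

theorem IsConnComp.isOpen (hX : IsOpen X) (hU : IsConnComp X U) : IsOpen U := by
  obtain ⟨x, hx⟩ := hU.1
  rw [hU.eq_connectedComponentIn hx]
  exact hX.connectedComponentIn

end ConnComp

def ComponentsMeetInOne {α : Type*} [TopologicalSpace α] (A X : Set α) : Prop :=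
  ∀ x ∈ A, ∃ y ∈ connectedComponentIn A x ∩ X,
    connectedComponentIn A x ∩ X ⊆ connectedComponentIn X y

theorem componentsMeetInOne_self {α : Type*} [TopologicalSpace α] (X : Set α) :
    ComponentsMeetInOne X X :=
  fun x hx => ⟨x, ⟨mem_connectedComponentIn hx, hx⟩, Set.inter_subset_left⟩

section Gluing

variable {n : ℕ} {X A B : Set (Fin n → ℝ)}

abbrev CompVertex (A B : Set (Fin n → ℝ)) : Type :=
  {U : Set (Fin n → ℝ) // IsConnComp A U} ⊕ {V : Set (Fin n → ℝ) // IsConnComp B V}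

def compAdj (A B : Set (Fin n → ℝ)) (p q : CompVertex A B) : Prop :=
  ∃ U V', p = Sum.inl U ∧ q = Sum.inr V' ∧ (U.1 ∩ V'.1).Nonempty

def CompVertex.carrier : CompVertex A B → Set (Fin n → ℝ) :=
  Sum.elim Subtype.val Subtype.val

theorem CompVertex.isOpen_carrier (hA : IsOpen A) (hB : IsOpen B) :
    ∀ w : CompVertex A B, IsOpen w.carrier
  | .inl U => U.2.isOpen hA
  | .inr V => V.2.isOpen hB

theorem CompVertex.exists_mem_carrier {z : Fin n → ℝ} (hz : z ∈ A ∪ B) :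
    ∃ w : CompVertex A B, z ∈ w.carrier := by
  rcases hz with hz | hz
  · exact ⟨.inl ⟨_, isConnComp_connectedComponentIn hz⟩, mem_connectedComponentIn hz⟩
  · exact ⟨.inr ⟨_, isConnComp_connectedComponentIn hz⟩, mem_connectedComponentIn hz⟩

theorem CompVertex.exists_connectedComponentIn (hAX : ComponentsMeetInOne A X)
    (hBX : ComponentsMeetInOne B X) (w : CompVertex A B) :
    ∃ y ∈ w.carrier ∩ X, w.carrier ∩ X ⊆ connectedComponentIn X y := by
  rcases w with ⟨U, hU⟩ | ⟨V, hV⟩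
  · obtain ⟨x, hx⟩ := hU.1
    obtain ⟨y, hy, hsub⟩ := hAX x (hU.2.1 hx)
    rw [← hU.eq_connectedComponentIn hx] at hy hsub
    exact ⟨y, hy, hsub⟩
  · obtain ⟨x, hx⟩ := hV.1
    obtain ⟨y, hy, hsub⟩ := hBX x (hV.2.1 hx)
    rw [← hV.eq_connectedComponentIn hx] at hy hsub
    exact ⟨y, hy, hsub⟩

theorem eqvGen_compAdj_of_mem {z : Fin n → ℝ} :
    ∀ {w w' : CompVertex A B}, z ∈ w.carrier → z ∈ w'.carrier → Relation.EqvGen (compAdj A B) w w'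
  | .inl U, .inl U', hz, hz' => by
    rw [Subtype.ext (U.2.eq_of_mem U'.2 hz hz')]
    exact .refl _
  | .inl U, .inr V, hz, hz' => .rel _ _ ⟨U, V, rfl, rfl, z, hz, hz'⟩
  | .inr V, .inl U, hz, hz' => .symm _ _ (.rel _ _ ⟨U, V, rfl, rfl, z, hz', hz⟩)
  | .inr V, .inr V', hz, hz' => by
    rw [Subtype.ext (V.2.eq_of_mem V'.2 hz hz')]
    exact .refl _

/-- Being linked through the graph is an equivalence relation with open classes on `A ∪ B`, so it
is trivial on each connected subset of `A ∪ B`. -/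
theorem eqvGen_compAdj_of_mem_connectedComponentIn (hA : IsOpen A) (hB : IsOpen B)
    (hXAB : X ⊆ A ∪ B) {x y : Fin n → ℝ} (hy : y ∈ connectedComponentIn X x)
    {w w' : CompVertex A B} (hxw : x ∈ w.carrier) (hyw' : y ∈ w'.carrier) :
    Relation.EqvGen (compAdj A B) w w' := by
  have hx : x ∈ X := connectedComponentIn_nonempty_iff.mp ⟨y, hy⟩
  have hvertex : ∀ z ∈ connectedComponentIn X x, ∃ u : CompVertex A B, z ∈ u.carrier :=
    fun z hz => CompVertex.exists_mem_carrier (hXAB (connectedComponentIn_subset X x hz))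
  refine isPreconnected_connectedComponentIn.induction₂'
    (fun z z' => ∀ u u' : CompVertex A B, z ∈ u.carrier → z' ∈ u'.carrier →
      Relation.EqvGen (compAdj A B) u u') (fun z hz => ?_) (fun z₁ z₂ z₃ _ hz₂ _ h₁₂ h₂₃ => ?_)
    (mem_connectedComponentIn hx) hy w w' hxw hyw'
  · obtain ⟨u₀, hz₀⟩ := hvertex z hz
    filter_upwards [mem_nhdsWithin_of_mem_nhds ((u₀.isOpen_carrier hA hB).mem_nhds hz₀)]
      with z' hz'
    exact ⟨fun u u' hu hu' => (eqvGen_compAdj_of_mem hu hz₀).trans _ _ _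
        (eqvGen_compAdj_of_mem hz' hu'),
      fun u u' hu hu' => (eqvGen_compAdj_of_mem hu hz').trans _ _ _
        (eqvGen_compAdj_of_mem hz₀ hu')⟩
  · intro u u'' hu hu''
    obtain ⟨u', hu'⟩ := hvertex z₂ hz₂
    exact (h₁₂ u u' hu hu').trans _ _ _ (h₂₃ u' u'' hu' hu'')

/-- Sending a vertex to the component of `X` that contains its trace on `X` identifies the
components of `X` with the connected components of the intersection graph. -/
theorem compCard_eq_mk_quot_compAdj (hA : IsOpen A) (hB : IsOpen B) (hXAB : X ⊆ A ∪ B)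
    (hABX : A ∩ B ⊆ X) (hAX : ComponentsMeetInOne A X) (hBX : ComponentsMeetInOne B X) :
    compCard X = Cardinal.mk (Quot (compAdj A B)) := by
  choose y hyX hsub using CompVertex.exists_connectedComponentIn hAX hBX
  have hcomp : ∀ w z, z ∈ CompVertex.carrier w → z ∈ X →
      connectedComponentIn X (y w) = connectedComponentIn X z :=
    fun w z hz hzX => connectedComponentIn_eq (hsub w ⟨hz, hzX⟩)
  let Θ : Quot (compAdj A B) → {W : Set (Fin n → ℝ) // IsConnComp X W} :=
    Quot.lift (fun w => ⟨_, isConnComp_connectedComponentIn (hyX w).2⟩) <| by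
      rintro _ _ ⟨U, V, rfl, rfl, z, hzU, hzV⟩
      have hzX : z ∈ X := hABX ⟨U.2.2.1 hzU, V.2.2.1 hzV⟩
      exact Subtype.ext ((hcomp (.inl U) z hzU hzX).trans (hcomp (.inr V) z hzV hzX).symm)
  have hinj : Function.Injective Θ := by
    rintro ⟨w⟩ ⟨w'⟩ h
    have hy' : y w' ∈ connectedComponentIn X (y w) := by
      have hW : connectedComponentIn X (y w) = connectedComponentIn X (y w') :=
        congrArg Subtype.val h
      rw [hW]
      exact mem_connectedComponentIn (hyX w').2
    exact Quot.eqvGen_sound (eqvGen_compAdj_of_mem_connectedComponentIn hA hB hXAB hy'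
      (hyX w).1 (hyX w').1)
  have hsurj : Function.Surjective Θ := by
    rintro ⟨W, hW⟩
    obtain ⟨x, hxW⟩ := hW.1
    have hxX : x ∈ X := hW.2.1 hxW
    obtain ⟨w, hxw⟩ := CompVertex.exists_mem_carrier (hXAB hxX)
    exact ⟨Quot.mk _ w, Subtype.ext ((hcomp w x hxw hxX).trans
      (hW.eq_connectedComponentIn hxW).symm)⟩
  exact (Cardinal.mk_congr (Equiv.ofBijective Θ ⟨hinj, hsurj⟩)).symm

end Gluing

section Flow

variable {α : Type*} [TopologicalSpace α] {X A : Set α} {φ : ℝ → α → α}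

structure EventuallyFlowsInto (φ : ℝ → α → α) (A X : Set α) : Prop where
  continuous : ∀ t, Continuous (φ t)
  continuousOn_left : ∀ x, ContinuousOn (fun t => φ t x) (Set.Ici 1)
  one : ∀ x, φ 1 x = x
  mem_left : ∀ x ∈ A, ∀ t, 1 ≤ t → φ t x ∈ A
  exists_mem_right : ∀ x ∈ A, ∃ t, 1 ≤ t ∧ φ t x ∈ X
  mem_right_of_le : ∀ x ∈ A, ∀ s t, 1 ≤ s → s ≤ t → φ s x ∈ X → φ t x ∈ X

theorem EventuallyFlowsInto.connectedComponentIn_eq (hφ : EventuallyFlowsInto φ A X) {x : α}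
    (hx : x ∈ A) {s t : ℝ} (hs : 1 ≤ s) (ht : 1 ≤ t) (hsX : φ s x ∈ X) (htX : φ t x ∈ X) :
    connectedComponentIn X (φ s x) = connectedComponentIn X (φ t x) := by
  wlog hst : s ≤ t generalizing s t
  · exact (this ht hs htX hsX (le_of_not_ge hst)).symm
  have hpath : IsPreconnected ((fun r => φ r x) '' Set.Icc s t) :=
    isPreconnected_Icc.image _
      ((hφ.continuousOn_left x).mono (Set.Icc_subset_Ici_iff hst |>.mpr hs))
  refine _root_.connectedComponentIn_eq (hpath.subset_connectedComponentIn
    ⟨s, Set.left_mem_Icc.mpr hst, rfl⟩ ?_ ⟨t, Set.right_mem_Icc.mpr hst, rfl⟩)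
  rintro _ ⟨r, hr, rfl⟩
  exact hφ.mem_right_of_le x hx s r hs hr.1 hsX

/-- The component of `X` that the flow reaches from `z` is locally constant in `z ∈ A`, because
`X` and its components are open. -/
theorem EventuallyFlowsInto.connectedComponentIn_eq_of_mem [LocallyConnectedSpace α]
    (hφ : EventuallyFlowsInto φ A X) (hX : IsOpen X) {x z : α} (hx : x ∈ A)
    (hz : z ∈ connectedComponentIn A x) {s t : ℝ} (hs : 1 ≤ s) (ht : 1 ≤ t) (hsX : φ s x ∈ X)
    (htX : φ t z ∈ X) : connectedComponentIn X (φ s x) = connectedComponentIn X (φ t z) := by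
  have hcompA : connectedComponentIn A x ⊆ A := connectedComponentIn_subset A x
  refine isPreconnected_connectedComponentIn.induction₂'
    (fun z z' => ∀ s t, 1 ≤ s → 1 ≤ t → φ s z ∈ X → φ t z' ∈ X →
      connectedComponentIn X (φ s z) = connectedComponentIn X (φ t z'))
    (fun z hz => ?_) (fun z₁ z₂ z₃ _ hz₂ _ h₁₂ h₂₃ => ?_) (mem_connectedComponentIn hx) hz
    s t hs ht hsX htX
  · obtain ⟨t₀, ht₀, ht₀X⟩ := hφ.exists_mem_right z (hcompA hz)
    have hnhds : φ t₀ ⁻¹' connectedComponentIn X (φ t₀ z) ∈ nhds z :=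
      (hX.connectedComponentIn.preimage (hφ.continuous t₀)).mem_nhds
        (mem_connectedComponentIn ht₀X)
    filter_upwards [mem_nhdsWithin_of_mem_nhds hnhds, self_mem_nhdsWithin] with z' hz' hz'A
    have heq' : ∀ t, 1 ≤ t → φ t z' ∈ X →
        connectedComponentIn X (φ t₀ z) = connectedComponentIn X (φ t z') := fun t ht htX =>
      (_root_.connectedComponentIn_eq hz').trans (hφ.connectedComponentIn_eq (hcompA hz'A) ht₀ ht
        (connectedComponentIn_subset X _ hz') htX)
    have heq : ∀ s, 1 ≤ s → φ s z ∈ X →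
        connectedComponentIn X (φ s z) = connectedComponentIn X (φ t₀ z) := fun s hs hsX =>
      hφ.connectedComponentIn_eq (hcompA hz) hs ht₀ hsX ht₀X
    exact ⟨fun s t hs ht hsX htX => (heq s hs hsX).trans (heq' t ht htX),
      fun s t hs ht hsX htX => ((heq t ht htX).trans (heq' s hs hsX)).symm⟩
  · intro s t hs ht hsX htX
    obtain ⟨r, hr, hrX⟩ := hφ.exists_mem_right z₂ (hcompA hz₂)
    exact (h₁₂ s r hs hr hsX hrX).trans (h₂₃ r t hr ht hrX htX)

theorem EventuallyFlowsInto.componentsMeetInOne [LocallyConnectedSpace α]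
    (hφ : EventuallyFlowsInto φ A X) (hX : IsOpen X) : ComponentsMeetInOne A X := by
  intro x hx
  obtain ⟨t, ht, htX⟩ := hφ.exists_mem_right x hx
  have hpath : IsPreconnected ((fun r => φ r x) '' Set.Icc 1 t) :=
    isPreconnected_Icc.image _ ((hφ.continuousOn_left x).mono Set.Icc_subset_Ici_self)
  have htA : φ t x ∈ connectedComponentIn A x := by
    refine hpath.subset_connectedComponentIn ⟨1, Set.left_mem_Icc.mpr ht, hφ.one x⟩ ?_
      ⟨t, Set.right_mem_Icc.mpr ht, rfl⟩
    rintro _ ⟨r, hr, rfl⟩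
    exact hφ.mem_left x hx r hr.1
  refine ⟨φ t x, ⟨htA, htX⟩, fun z ⟨hz, hzX⟩ => ?_⟩
  rw [hφ.connectedComponentIn_eq_of_mem hX hx hz ht le_rfl htX (by rwa [hφ.one]), hφ.one]
  exact mem_connectedComponentIn hzX

end Flow

section RealPowers

open Filter

variable {a b G H : ℝ}

theorem rpow_mul_add_rpow_mul_neg_iff {t : ℝ} (ht : 0 < t) :
    t ^ a * G + t ^ b * H < 0 ↔ H < t ^ (a - b) * -G := by
  have hsplit : t ^ a * G + t ^ b * H = t ^ b * (t ^ (a - b) * G + H) := by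
    rw [mul_add, ← mul_assoc, ← Real.rpow_add ht, add_sub_cancel]
  have htb : 0 < t ^ b := Real.rpow_pos_of_pos ht b
  rw [hsplit]
  constructor
  · intro h
    linarith [neg_of_mul_neg_right h htb.le]
  · intro h
    exact mul_neg_of_pos_of_neg htb (by linarith)

theorem rpow_mul_add_rpow_mul_neg_of_le (hab : b ≤ a) (hG : G < 0) {s t : ℝ} (hs : 0 < s)
    (hst : s ≤ t) (h : s ^ a * G + s ^ b * H < 0) : t ^ a * G + t ^ b * H < 0 := by
  rw [rpow_mul_add_rpow_mul_neg_iff hs] at h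
  rw [rpow_mul_add_rpow_mul_neg_iff (hs.trans_le hst)]
  calc H < s ^ (a - b) * -G := h
    _ ≤ t ^ (a - b) * -G := by gcongr; linarith

theorem exists_rpow_mul_add_rpow_mul_neg (hab : b < a) (hG : G < 0) (H : ℝ) :
    ∃ t, 1 ≤ t ∧ t ^ a * G + t ^ b * H < 0 := by
  have hlim : Tendsto (fun t : ℝ => t ^ (a - b) * -G) atTop atTop :=
    (tendsto_rpow_atTop (sub_pos.mpr hab)).atTop_mul_const (neg_pos.mpr hG)
  obtain ⟨t, ht, hH⟩ := ((eventually_ge_atTop 1).and (hlim.eventually_gt_atTop H)).exists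
  exact ⟨t, ht, (rpow_mul_add_rpow_mul_neg_iff (zero_lt_one.trans_le ht)).mpr hH⟩

end RealPowers

section Signomial

variable {n : ℕ} {S : Finset (Fin n → ℝ)} {c : (Fin n → ℝ) → ℝ} {F G : Set (Fin n → ℝ)}

theorem negSetOn_of_forall_mem (h : ∀ μ ∈ S, μ ∈ F) : negSetOn S c F = negSet S c := by
  have hsig : sigOn S c F = sig S c :=
    funext fun _ => Finset.sum_congr rfl fun μ hμ => if_pos (h μ hμ)
  simp only [negSetOn, negSet, hsig]

theorem negSetOn_congr (h : ∀ μ ∈ S, μ ∈ F ↔ μ ∈ G) : negSetOn S c F = negSetOn S c G := by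
  have hsig : sigOn S c F = sigOn S c G :=
    funext fun _ => Finset.sum_congr rfl fun μ hμ => by classical exact if_congr (h μ hμ) rfl rfl
  simp only [negSetOn, hsig]

theorem sig_eq_sigOn_add_sigOn (hS : ∀ μ ∈ S, μ ∈ F ∨ μ ∈ G) (hFG : Disjoint F G)
    (x : Fin n → ℝ) : sig S c x = sigOn S c F x + sigOn S c G x := by
  rw [sig, sigOn, sigOn, ← Finset.sum_add_distrib]
  refine Finset.sum_congr rfl fun μ hμ => ?_
  rcases hS μ hμ with hF | hG
  · rw [if_pos hF, if_neg (Set.disjoint_left.mp hFG hF), add_zero]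
  · rw [if_neg (Set.disjoint_right.mp hFG hG), if_pos hG, zero_add]

theorem negSet_subset_union (hS : ∀ μ ∈ S, μ ∈ F ∨ μ ∈ G) (hFG : Disjoint F G) :
    negSet S c ⊆ negSetOn S c F ∪ negSetOn S c G := by
  rintro x ⟨hx, hfx⟩
  rw [sig_eq_sigOn_add_sigOn hS hFG] at hfx
  rcases lt_or_ge (sigOn S c F x) 0 with hF | hF
  · exact Or.inl ⟨hx, hF⟩
  · exact Or.inr ⟨hx, by linarith⟩

theorem negSetOn_inter_subset (hS : ∀ μ ∈ S, μ ∈ F ∨ μ ∈ G) (hFG : Disjoint F G) :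
    negSetOn S c F ∩ negSetOn S c G ⊆ negSet S c := by
  rintro x ⟨⟨hx, hF⟩, -, hG⟩
  exact ⟨hx, by rw [sig_eq_sigOn_add_sigOn hS hFG]; linarith⟩

theorem isOpen_negSetOn : IsOpen (negSetOn S c F) := by
  have horth : IsOpen {x : Fin n → ℝ | ∀ i, 0 < x i} := by
    simpa only [Set.pi, Set.mem_univ, Set.mem_Ioi, true_implies] using
      isOpen_set_pi (Set.finite_univ (α := Fin n)) fun _ _ => isOpen_Ioi (a := (0 : ℝ))
  have hcont : ContinuousOn (sigOn S c F) {x : Fin n → ℝ | ∀ i, 0 < x i} := by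
    refine continuousOn_finsetSum _ fun μ _ => ?_
    split_ifs
    · exact continuousOn_const.mul (continuousOn_finsetProd _ fun i _ =>
        (continuous_apply i).continuousOn.rpow_const fun x hx => Or.inl (hx i).ne')
    · exact continuousOn_const
  exact hcont.isOpen_inter_preimage horth isOpen_Iio

theorem isOpen_negSet : IsOpen (negSet S c) := by
  rw [← negSetOn_of_forall_mem (F := Set.univ) fun μ _ => Set.mem_univ μ]
  exact isOpen_negSetOn

end Signomial

section Scaling

variable {n : ℕ} {v x : Fin n → ℝ} {t : ℝ}

noncomputable def rpowScale (v : Fin n → ℝ) (t : ℝ) (x : Fin n → ℝ) : Fin n → ℝ :=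
  fun i => x i * t ^ v i

theorem rpowScale_pos (ht : 0 < t) (hx : ∀ i, 0 < x i) : ∀ i, 0 < rpowScale v t x i :=
  fun i => mul_pos (hx i) (Real.rpow_pos_of_pos ht _)

theorem rpowScale_one (v x : Fin n → ℝ) : rpowScale v 1 x = x :=
  funext fun i => by rw [rpowScale, Real.one_rpow, mul_one]

theorem continuous_rpowScale (v : Fin n → ℝ) (t : ℝ) : Continuous (rpowScale v t) :=
  continuous_pi fun i => (continuous_apply i).mul continuous_const

theorem continuousOn_rpowScale (v x : Fin n → ℝ) :
    ContinuousOn (fun t => rpowScale v t x) (Set.Ioi 0) :=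
  continuousOn_pi.mpr fun _ => continuousOn_const.mul
    (continuousOn_id.rpow_const fun _ ht => Or.inl (ne_of_gt ht))

theorem prod_rpowScale_rpow (μ : Fin n → ℝ) (ht : 0 < t) (hx : ∀ i, 0 < x i) :
    ∏ i, rpowScale v t x i ^ μ i = t ^ (v ⬝ᵥ μ) * ∏ i, x i ^ μ i := by
  rw [dotProduct, Real.rpow_sum_of_pos ht, ← Finset.prod_mul_distrib]
  refine Finset.prod_congr rfl fun i _ => ?_
  rw [rpowScale, Real.mul_rpow (hx i).le (Real.rpow_nonneg ht.le _), ← Real.rpow_mul ht.le,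
    mul_comm]

theorem sigOn_hyp_rpowScale {S : Finset (Fin n → ℝ)} {c : (Fin n → ℝ) → ℝ} {e : ℝ} (ht : 0 < t)
    (hx : ∀ i, 0 < x i) :
    sigOn S c (Hyp v e) (rpowScale v t x) = t ^ e * sigOn S c (Hyp v e) x := by
  rw [sigOn, sigOn, Finset.mul_sum]
  refine Finset.sum_congr rfl fun μ _ => ?_
  split_ifs with hμ
  · rw [prod_rpowScale_rpow μ ht hx, show v ⬝ᵥ μ = e from hμ]
    ring
  · rw [mul_zero]

end Scaling

section TwoLevels

variable {n : ℕ} {S : Finset (Fin n → ℝ)} {c : (Fin n → ℝ) → ℝ} {v : Fin n → ℝ} {a b : ℝ}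

theorem disjoint_hyp (h : a ≠ b) : Disjoint (Hyp v a) (Hyp v b) :=
  Set.disjoint_left.mpr fun _ ha hb => h (ha.symm.trans hb)

theorem hyp_neg_neg (v : Fin n → ℝ) (e : ℝ) : Hyp (-v) (-e) = Hyp v e := by
  ext μ
  show -v ⬝ᵥ μ = -e ↔ v ⬝ᵥ μ = e
  rw [neg_dotProduct, neg_inj]

theorem eventuallyFlowsInto_rpowScale (hba : b < a) (hS : ∀ μ ∈ S, μ ∈ Hyp v a ∨ μ ∈ Hyp v b) :
    EventuallyFlowsInto (rpowScale v) (negSetOn S c (Hyp v a)) (negSet S c) := by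
  have hsig : ∀ x, (∀ i, 0 < x i) → ∀ t, 0 < t → sig S c (rpowScale v t x) =
      t ^ a * sigOn S c (Hyp v a) x + t ^ b * sigOn S c (Hyp v b) x := fun x hx t ht => by
    rw [sig_eq_sigOn_add_sigOn hS (disjoint_hyp hba.ne'), sigOn_hyp_rpowScale ht hx,
      sigOn_hyp_rpowScale ht hx]
  refine ⟨continuous_rpowScale v,
    fun x => (continuousOn_rpowScale v x).mono (Set.Ici_subset_Ioi.mpr zero_lt_one),
    rpowScale_one v, ?_, ?_, ?_⟩
  · rintro x ⟨hx, hgx⟩ t ht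
    have ht0 : 0 < t := zero_lt_one.trans_le ht
    refine ⟨rpowScale_pos ht0 hx, ?_⟩
    rw [sigOn_hyp_rpowScale ht0 hx]
    exact mul_neg_of_pos_of_neg (Real.rpow_pos_of_pos ht0 a) hgx
  · rintro x ⟨hx, hgx⟩
    obtain ⟨t, ht, hneg⟩ := exists_rpow_mul_add_rpow_mul_neg hba hgx (sigOn S c (Hyp v b) x)
    have ht0 : 0 < t := zero_lt_one.trans_le ht
    exact ⟨t, ht, rpowScale_pos ht0 hx, by rwa [hsig x hx t ht0]⟩
  · rintro x ⟨hx, hgx⟩ s t hs hst ⟨-, hsX⟩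
    have hs0 : 0 < s := zero_lt_one.trans_le hs
    have ht0 : 0 < t := hs0.trans_le hst
    rw [hsig x hx s hs0] at hsX
    refine ⟨rpowScale_pos ht0 hx, ?_⟩
    rw [hsig x hx t ht0]
    exact rpow_mul_add_rpow_mul_neg_of_le hba.le hgx hs0 hst hsX

end TwoLevels

section Faces

variable {n : ℕ} {S : Finset (Fin n → ℝ)} {v : Fin n → ℝ}

theorem mem_faceOf_iff {w μ : Fin n → ℝ} (hμ : μ ∈ S) :
    μ ∈ faceOf S w ↔ ∀ ν ∈ S, w ⬝ᵥ ν ≤ w ⬝ᵥ μ :=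
  ⟨fun h ν hν => h.2 ν (subset_convexHull ℝ _ hν), fun h => ⟨subset_convexHull ℝ _ hμ,
    convexHull_min h (convex_halfSpace_le ⟨dotProduct_add w, fun r ν => dotProduct_smul r w ν⟩ _)⟩⟩

theorem forall_mem_faceOf_of_forall_eq (h : ∀ μ ∈ S, ∀ ν ∈ S, v ⬝ᵥ μ = v ⬝ᵥ ν) :
    ∀ μ ∈ S, μ ∈ faceOf S v :=
  fun μ hμ => (mem_faceOf_iff hμ).mpr fun ν hν => (h ν hν μ hμ).le

theorem exists_faceOf_iff_hyp (h : ∃ μ ∈ S, ∃ ν ∈ S, v ⬝ᵥ μ ≠ v ⬝ᵥ ν) :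
    ∃ a b, b < a ∧ (∀ μ ∈ S, μ ∈ faceOf S v ↔ μ ∈ Hyp v a) ∧
      ∀ μ ∈ S, μ ∈ faceOf S (-v) ↔ μ ∈ Hyp v b := by
  obtain ⟨μ₀, hμ₀, ν₀, hν₀, hne⟩ := h
  obtain ⟨μmax, hmax, hmaxle⟩ := S.exists_max_image (v ⬝ᵥ ·) ⟨μ₀, hμ₀⟩
  obtain ⟨μmin, hmin, hminle⟩ := S.exists_min_image (v ⬝ᵥ ·) ⟨μ₀, hμ₀⟩
  refine ⟨v ⬝ᵥ μmax, v ⬝ᵥ μmin, ?_, fun μ hμ => ?_, fun μ hμ => ?_⟩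
  · exact lt_of_le_of_ne (hmaxle μmin hmin) fun h => hne (by
      linarith [hmaxle μ₀ hμ₀, hminle μ₀ hμ₀, hmaxle ν₀ hν₀, hminle ν₀ hν₀])
  · rw [mem_faceOf_iff hμ]
    exact ⟨fun h => le_antisymm (hmaxle μ hμ) (h μmax hmax),
      fun h ν hν => (hmaxle ν hν).trans_eq h.symm⟩
  · simp only [mem_faceOf_iff hμ, neg_dotProduct, neg_le_neg_iff]
    exact ⟨fun h => le_antisymm (h μmin hmin) (hminle μ hμ),
      fun h ν hν => h.trans_le (hminle ν hν)⟩

end Faces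

theorem compCard_negSet_eq_mk_quot_compAdj {n : ℕ} {S : Finset (Fin n → ℝ)}
    {c : (Fin n → ℝ) → ℝ} {v : Fin n → ℝ}
    (hcov : (↑S : Set (Fin n → ℝ)) ⊆ faceOf S v ∪ faceOf S (-v)) :
    compCard (negSet S c) = Cardinal.mk
      (Quot (compAdj (negSetOn S c (faceOf S v)) (negSetOn S c (faceOf S (-v))))) := by
  by_cases hdeg : ∀ μ ∈ S, ∀ ν ∈ S, v ⬝ᵥ μ = v ⬝ᵥ ν
  · have hdeg' : ∀ μ ∈ S, ∀ ν ∈ S, -v ⬝ᵥ μ = -v ⬝ᵥ ν := fun μ hμ ν hν => by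
      rw [neg_dotProduct, neg_dotProduct, hdeg μ hμ ν hν]
    rw [negSetOn_of_forall_mem (forall_mem_faceOf_of_forall_eq hdeg),
      negSetOn_of_forall_mem (forall_mem_faceOf_of_forall_eq hdeg')]
    exact compCard_eq_mk_quot_compAdj isOpen_negSet isOpen_negSet Set.subset_union_left
      Set.inter_subset_left (componentsMeetInOne_self _) (componentsMeetInOne_self _)
  · push Not at hdeg
    obtain ⟨a, b, hba, ha, hb⟩ := exists_faceOf_iff_hyp hdeg
    have hS : ∀ μ ∈ S, μ ∈ Hyp v a ∨ μ ∈ Hyp v b :=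
      fun μ hμ => (hcov hμ).imp (ha μ hμ).mp (hb μ hμ).mp
    have hS' : ∀ μ ∈ S, μ ∈ Hyp (-v) (-b) ∨ μ ∈ Hyp (-v) (-a) := by
      simpa only [hyp_neg_neg, or_comm] using hS
    rw [negSetOn_congr ha, negSetOn_congr hb]
    have hdisj := disjoint_hyp (v := v) hba.ne'
    refine compCard_eq_mk_quot_compAdj isOpen_negSetOn isOpen_negSetOn
      (negSet_subset_union hS hdisj) (negSetOn_inter_subset hS hdisj)
      ((eventuallyFlowsInto_rpowScale hba hS).componentsMeetInOne isOpen_negSet) ?_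
    simpa only [hyp_neg_neg] using
      (eventuallyFlowsInto_rpowScale (neg_lt_neg hba) hS').componentsMeetInOne isOpen_negSet

/-- The components of the bipartite graph are modelled as the quotient of its vertex set by (the
equivalence relation generated by) the edge relation. -/
theorem stmt_13_general (n : ℕ) (S : Finset (Fin n → ℝ)) (c : (Fin n → ℝ) → ℝ)
    (v : Fin n → ℝ)
    (hcov : (↑S : Set (Fin n → ℝ)) ⊆ faceOf S v ∪ faceOf S (-v))
    (D : Cardinal)
    (hD : D = Cardinal.mk (Quot (fun p q :
        {U : Set (Fin n → ℝ) // IsConnComp (negSetOn S c (faceOf S v)) U} ⊕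
        {V : Set (Fin n → ℝ) // IsConnComp (negSetOn S c (faceOf S (-v))) V} =>
      ∃ U V', p = Sum.inl U ∧ q = Sum.inr V' ∧ (U.1 ∩ V'.1).Nonempty))) :
    compCard (negSet S c) = D ∧
      D ≤ compCard (negSetOn S c (faceOf S v)) + compCard (negSetOn S c (faceOf S (-v))) := by
  subst hD
  refine ⟨compCard_negSet_eq_mk_quot_compAdj hcov, Cardinal.mk_quot_le.trans ?_⟩
  rw [Cardinal.mk_sum, Cardinal.lift_id, Cardinal.lift_id]
  rfl

/-- Proposition 3.3: if the support lies on two parallel faces `N(f)_v` and `N(f)_{-v}`,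
then the number of negative connected components of `f` equals the number `D` of connected
components of the bipartite intersection graph on the components of `f|_{N(f)_v}` and
`f|_{N(f)_{-v}}`, and `D` is at most the total number of those components. The components of
the graph are modelled as the quotient of the vertex set by (the equivalence relation
generated by) the edge relation. -/
theorem stmt_13 (n : ℕ) (S : Finset (Fin n → ℝ)) (c : (Fin n → ℝ) → ℝ)
    (hc : ∀ μ ∈ S, c μ ≠ 0)
    (v : Fin n → ℝ)
    (hcov : (↑S : Set (Fin n → ℝ)) ⊆ faceOf S v ∪ faceOf S (-v))
    (D : Cardinal)
    (hD : D = Cardinal.mk (Quot (fun p q :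
        {U : Set (Fin n → ℝ) // IsConnComp (negSetOn S c (faceOf S v)) U} ⊕
        {V : Set (Fin n → ℝ) // IsConnComp (negSetOn S c (faceOf S (-v))) V} =>
      ∃ U V', p = Sum.inl U ∧ q = Sum.inr V' ∧ (U.1 ∩ V'.1).Nonempty))) :
    compCard (negSet S c) = D ∧
      D ≤ compCard (negSetOn S c (faceOf S v)) + compCard (negSetOn S c (faceOf S (-v))) :=
  stmt_13_general n S c v hcov D hD
end

section
/- Let f : ℝ_{>0}^n → ℝ, f(x) = ∑_{μ ∈ σ(f)} c_μ x^μ be a signomial. If σ(f) has a strict separating hyperplane, then f satisfies the closure property, that is, the closure of f^{-1}(ℝ_{<0}) in ℝ_{>0}^n equals f^{-1}(ℝ_{≤0}). -/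
open Finset

/-- `σ₊(f)`: the positive exponent vectors. -/
def sigPos' {n : ℕ} (S : Finset (Fin n → ℝ)) (c : (Fin n → ℝ) → ℝ) : Set (Fin n → ℝ) :=
  {μ | μ ∈ S ∧ 0 < c μ}

/-- `σ₋(f)`: the negative exponent vectors. -/
def sigNeg' {n : ℕ} (S : Finset (Fin n → ℝ)) (c : (Fin n → ℝ) → ℝ) : Set (Fin n → ℝ) :=
  {μ | μ ∈ S ∧ c μ < 0}

/-!
Along the curve `t ↦ (x_i t^{v_i})_i` the monomial `x^μ` is multiplied by `t^{v·μ}`. For `t > 1`,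
separation makes every negative term scale by at least `t^a` and every positive term by at most
`t^a`, while the strict term scales by more; hence `f` at the curve point is `< t^a f(x) ≤ 0`
whenever `f(x) ≤ 0`, and letting `t → 1⁺` puts `x` in the closure of `f⁻¹(ℝ_{<0})`.
The other inclusion is continuity of `f` on the positive orthant.
-/

open Filter Topology

lemma continuousAt_sig {n : ℕ} (S : Finset (Fin n → ℝ)) (c : (Fin n → ℝ) → ℝ)
    {x : Fin n → ℝ} (hx : ∀ i, x i ≠ 0) : ContinuousAt (sig S c) x :=
  tendsto_finsetSum _ fun _ _ => (tendsto_finsetProd _ fun i _ =>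
    (continuousAt_apply i x).rpow_const (Or.inl (hx i))).const_mul _

lemma sig_nonpos_of_mem_closure_negSet {n : ℕ} {S : Finset (Fin n → ℝ)}
    {c : (Fin n → ℝ) → ℝ} {x : Fin n → ℝ} (hx : ∀ i, 0 < x i)
    (hcl : x ∈ closure (negSet S c)) : sig S c x ≤ 0 := by
  have himage : sig S c '' negSet S c ⊆ Set.Iio 0 := by
    rintro _ ⟨y, hy, rfl⟩
    exact hy.2
  have hmem := closure_mono himage
    ((continuousAt_sig S c fun i => (hx i).ne').continuousWithinAt.mem_closure_image hcl)
  rwa [closure_Iio] at hmem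

lemma prod_mul_rpow_rpow {n : ℕ} {x : Fin n → ℝ} (hx : ∀ i, 0 ≤ x i) {t : ℝ} (ht : 0 < t)
    (v μ : Fin n → ℝ) :
    ∏ i, (x i * t ^ v i) ^ μ i = (∏ i, x i ^ μ i) * t ^ ∑ i, v i * μ i := by
  simp_rw [Real.rpow_sum_of_pos ht, ← Finset.prod_mul_distrib,
    Real.mul_rpow (hx _) (Real.rpow_nonneg ht.le _), Real.rpow_mul ht.le]

lemma mul_rpow_le_mul_rpow {c a b t : ℝ} (ht : 1 ≤ t) (hneg : c < 0 → a ≤ b)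
    (hpos : 0 < c → b ≤ a) : c * t ^ b ≤ c * t ^ a := by
  rcases lt_trichotomy c 0 with hc | rfl | hc
  · exact mul_le_mul_of_nonpos_left (Real.rpow_le_rpow_of_exponent_le ht (hneg hc)) hc.le
  · simp
  · exact mul_le_mul_of_nonneg_left (Real.rpow_le_rpow_of_exponent_le ht (hpos hc)) hc.le

lemma sig_mul_rpow_lt {n : ℕ} {S : Finset (Fin n → ℝ)} {c : (Fin n → ℝ) → ℝ}
    {v : Fin n → ℝ} {a : ℝ} (hsepneg : sigNeg' S c ⊆ Hplus v a) (hseppos : sigPos' S c ⊆ Hminus v a)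
    (hstrict : (sigNeg' S c ∩ HplusO v a).Nonempty) {x : Fin n → ℝ} (hx : ∀ i, 0 < x i)
    {t : ℝ} (ht : 1 < t) :
    sig S c (fun i => x i * t ^ v i) < t ^ a * sig S c x := by
  obtain ⟨μ₀, ⟨hμ₀S, hcμ₀⟩, hμ₀a⟩ := hstrict
  unfold sig
  rw [Finset.mul_sum]
  have hterm : ∀ μ : Fin n → ℝ, c μ * (∏ i, (x i * t ^ v i) ^ μ i) =
      (c μ * t ^ ∑ i, v i * μ i) * ∏ i, x i ^ μ i := fun μ => by
    rw [prod_mul_rpow_rpow (fun i => (hx i).le) (zero_lt_one.trans ht)]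
    ring
  have hmonomial_pos : ∀ μ : Fin n → ℝ, 0 < ∏ i, x i ^ μ i := fun μ =>
    Finset.prod_pos fun i _ => Real.rpow_pos_of_pos (hx i) _
  refine Finset.sum_lt_sum (fun μ hμ => ?_) ⟨μ₀, hμ₀S, ?_⟩
  · rw [hterm, ← mul_assoc, mul_comm (t ^ a)]
    exact mul_le_mul_of_nonneg_right (mul_rpow_le_mul_rpow ht.le
      (fun h => hsepneg ⟨hμ, h⟩) (fun h => hseppos ⟨hμ, h⟩)) (hmonomial_pos μ).le
  · rw [hterm, ← mul_assoc, mul_comm (t ^ a)]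
    exact mul_lt_mul_of_pos_right
      (mul_lt_mul_of_neg_left (Real.rpow_lt_rpow_of_exponent_lt ht hμ₀a) hcμ₀) (hmonomial_pos μ₀)

lemma tendsto_mul_rpow_nhds_one {n : ℕ} (x v : Fin n → ℝ) :
    Tendsto (fun t : ℝ => fun i => x i * t ^ v i) (𝓝 1) (𝓝 x) := by
  have hcont : ContinuousAt (fun t : ℝ => fun i => x i * t ^ v i) 1 :=
    continuousAt_pi.2 fun i => (continuousAt_id.rpow_const (Or.inl one_ne_zero)).const_mul _
  simpa using hcont.tendsto

theorem stmt_16_general (n : ℕ) (S : Finset (Fin n → ℝ)) (c : (Fin n → ℝ) → ℝ)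
    (v : Fin n → ℝ) (a : ℝ)
    (hsepneg : sigNeg' S c ⊆ Hplus v a) (hseppos : sigPos' S c ⊆ Hminus v a)
    (hstrict : (sigNeg' S c ∩ HplusO v a).Nonempty) :
    closure (negSet S c) ∩ {x : Fin n → ℝ | ∀ i, 0 < x i} =
      {x : Fin n → ℝ | (∀ i, 0 < x i) ∧ sig S c x ≤ 0} := by
  ext x
  constructor
  · rintro ⟨hcl, hx⟩
    exact ⟨hx, sig_nonpos_of_mem_closure_negSet hx hcl⟩
  · rintro ⟨hx, hle⟩
    refine ⟨mem_closure_of_tendsto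
      ((tendsto_mul_rpow_nhds_one x v).mono_left (nhdsWithin_le_nhds (s := Set.Ioi 1))) ?_, hx⟩
    filter_upwards [self_mem_nhdsWithin] with t (ht : 1 < t)
    have ht₀ : 0 < t := zero_lt_one.trans ht
    exact ⟨fun i => mul_pos (hx i) (Real.rpow_pos_of_pos ht₀ _),
      (sig_mul_rpow_lt hsepneg hseppos hstrict hx ht).trans_le
        (mul_nonpos_of_nonneg_of_nonpos (Real.rpow_pos_of_pos ht₀ a).le hle)⟩

/-- Proposition 3.9(i): if the support has a strict separating hyperplane, then `f` satisfies
the closure property: the closure of `f⁻¹(ℝ_{<0})` in the positive orthant equals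
`f⁻¹(ℝ_{≤0})`. -/
theorem stmt_16 (n : ℕ) (S : Finset (Fin n → ℝ)) (c : (Fin n → ℝ) → ℝ)
    (hc : ∀ μ ∈ S, c μ ≠ 0)
    (v : Fin n → ℝ) (hv : v ≠ 0) (a : ℝ)
    (hsepneg : sigNeg' S c ⊆ Hplus v a) (hseppos : sigPos' S c ⊆ Hminus v a)
    (hstrict : (sigNeg' S c ∩ HplusO v a).Nonempty) :
    closure (negSet S c) ∩ {x : Fin n → ℝ | ∀ i, 0 < x i} =
      {x : Fin n → ℝ | (∀ i, 0 < x i) ∧ sig S c x ≤ 0} :=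
  stmt_16_general n S c v a hsepneg hseppos hstrict
end

section
/- Let f : ℝ_{>0}^n → ℝ, f(x) = ∑_{μ ∈ σ(f)} c_μ x^μ be a signomial. If there exists a proper face F of the Newton polytope N(f) with σ_-(f) ⊆ F, then f satisfies the closure property, that is, the closure of f^{-1}(ℝ_{<0}) in ℝ_{>0}^n equals f^{-1}(ℝ_{≤0}). -/
open Finset

/-- `σ₊(f)`: the positive exponent vectors. -/
def sigPosSet {n : ℕ} (S : Finset (Fin n → ℝ)) (c : (Fin n → ℝ) → ℝ) : Set (Fin n → ℝ) :=
  {μ | μ ∈ S ∧ 0 < c μ}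

/-- `σ₋(f)`: the negative exponent vectors. -/
def sigNegSet {n : ℕ} (S : Finset (Fin n → ℝ)) (c : (Fin n → ℝ) → ℝ) : Set (Fin n → ℝ) :=
  {μ | μ ∈ S ∧ c μ < 0}

/-!
Let `v` be an outer normal of the face and `a = max_{μ ∈ σ(f)} v ⬝ μ`. Every negative exponent
lies on the face, so `v ⬝ μ = a` there, while properness gives an exponent `μ₀` off the face,
necessarily with `c μ₀ > 0` and `v ⬝ μ₀ < a`. Along the curve `t ↦ (xᵢ t^{vᵢ})ᵢ` the monomial
`x^μ` is scaled by `t^{v ⬝ μ}`, so for `t > 1` we get `f(x ⋆ t^v) < t^a f(x)`. Hence every `x`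
with `f(x) ≤ 0` is the limit, as `t → 1⁺`, of points where `f < 0`; the converse inclusion is
continuity of `f` on the positive orthant.
-/

section DotProduct

variable {ι : Type*} [Fintype ι]

theorem isLinearMap_dotProduct (v : ι → ℝ) : IsLinearMap ℝ (v ⬝ᵥ ·) :=
  ⟨dotProduct_add v, fun r w => dotProduct_smul r v w⟩

theorem dotProduct_le_of_mem_convexHull {s : Set (ι → ℝ)} {v ω : ι → ℝ} {a : ℝ}
    (h : ∀ μ ∈ s, v ⬝ᵥ μ ≤ a) (hω : ω ∈ convexHull ℝ s) : v ⬝ᵥ ω ≤ a :=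
  convexHull_min h (convex_halfSpace_le (isLinearMap_dotProduct v) a) hω

theorem le_dotProduct_of_mem_convexHull {s : Set (ι → ℝ)} {v ω : ι → ℝ} {a : ℝ}
    (h : ∀ μ ∈ s, a ≤ v ⬝ᵥ μ) (hω : ω ∈ convexHull ℝ s) : a ≤ v ⬝ᵥ ω :=
  convexHull_min h (convex_halfSpace_ge (isLinearMap_dotProduct v) a) hω

end DotProduct

section Face

variable {n : ℕ} {S : Finset (Fin n → ℝ)} {v : Fin n → ℝ}

theorem nonempty_of_faceOf_ne_convexHull (h : faceOf S v ≠ convexHull ℝ ↑S) : S.Nonempty := by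
  rw [Finset.nonempty_iff_ne_empty]
  rintro rfl
  simp [faceOf] at h

theorem dotProduct_le_sup'_of_mem_convexHull (hS : S.Nonempty) {ω : Fin n → ℝ}
    (hω : ω ∈ convexHull ℝ ↑S) : v ⬝ᵥ ω ≤ S.sup' hS (v ⬝ᵥ ·) :=
  dotProduct_le_of_mem_convexHull (fun _ hμ => S.le_sup' (v ⬝ᵥ ·) hμ) hω

theorem dotProduct_eq_sup'_of_mem_faceOf (hS : S.Nonempty) {μ : Fin n → ℝ}
    (hμ : μ ∈ faceOf S v) : v ⬝ᵥ μ = S.sup' hS (v ⬝ᵥ ·) := by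
  obtain ⟨ν, hνS, hν⟩ := S.exists_mem_eq_sup' hS (v ⬝ᵥ ·)
  refine (dotProduct_le_sup'_of_mem_convexHull hS hμ.1).antisymm ?_
  rw [hν]
  exact hμ.2 ν (subset_convexHull ℝ _ hνS)

theorem exists_dotProduct_lt_sup'_of_faceOf_ne_convexHull (hS : S.Nonempty)
    (h : faceOf S v ≠ convexHull ℝ ↑S) : ∃ μ ∈ S, v ⬝ᵥ μ < S.sup' hS (v ⬝ᵥ ·) := by
  by_contra! hge
  refine h (Set.Subset.antisymm (fun ω hω => hω.1) fun ω hω => ⟨hω, fun μ hμ => ?_⟩)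
  exact (dotProduct_le_sup'_of_mem_convexHull hS hμ).trans
    (le_dotProduct_of_mem_convexHull hge hω)

end Face

section Signomial

variable {n : ℕ} (S : Finset (Fin n → ℝ)) (c : (Fin n → ℝ) → ℝ)

theorem continuousOn_sig : ContinuousOn (sig S c) {x | ∀ i, 0 < x i} :=
  continuousOn_finsetSum _ fun _ _ => continuousOn_const.mul <| continuousOn_finsetProd _ fun i _ =>
    (continuousOn_apply i _).rpow_const fun _ hx => Or.inl (hx i).ne'

theorem closure_negSet_inter_subset :
    closure (negSet S c) ∩ {x : Fin n → ℝ | ∀ i, 0 < x i} ⊆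
      {x : Fin n → ℝ | (∀ i, 0 < x i) ∧ sig S c x ≤ 0} := by
  rintro x ⟨hcl, hx⟩
  have hcont : ContinuousWithinAt (sig S c) (negSet S c) x :=
    (continuousOn_sig S c x hx).mono fun _ hy => hy.1
  exact ⟨hx, hcont.closure_le hcl continuousWithinAt_const fun _ hy => hy.2.le⟩

theorem sig_mul_rpow (v : Fin n → ℝ) {x : Fin n → ℝ} (hx : ∀ i, 0 < x i) {t : ℝ} (ht : 0 < t) :
    sig S c (fun i => x i * t ^ v i) = ∑ μ ∈ S, (c μ * ∏ i, x i ^ μ i) * t ^ (v ⬝ᵥ μ) := by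
  refine Finset.sum_congr rfl fun μ _ => ?_
  have h : ∀ i, (x i * t ^ v i) ^ μ i = x i ^ μ i * t ^ (v i * μ i) := fun i => by
    rw [Real.mul_rpow (hx i).le (Real.rpow_nonneg ht.le _), ← Real.rpow_mul ht.le]
  simp only [h, Finset.prod_mul_distrib, ← Real.rpow_sum_of_pos ht, mul_assoc]
  rfl

variable {S c}

theorem sig_mul_rpow_lt_s17 {v μ₀ x : Fin n → ℝ} {a t : ℝ}
    (hpos : ∀ μ ∈ S, 0 < c μ → v ⬝ᵥ μ ≤ a) (hneg : ∀ μ ∈ S, c μ < 0 → a ≤ v ⬝ᵥ μ)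
    (hμ₀ : μ₀ ∈ S) (hc₀ : 0 < c μ₀) (hlt : v ⬝ᵥ μ₀ < a)
    (hx : ∀ i, 0 < x i) (ht : 1 < t) :
    sig S c (fun i => x i * t ^ v i) < t ^ a * sig S c x := by
  have hmon : ∀ μ : Fin n → ℝ, 0 < ∏ i, x i ^ μ i := fun μ =>
    Finset.prod_pos fun i _ => Real.rpow_pos_of_pos (hx i) _
  rw [sig_mul_rpow S c v hx (zero_lt_one.trans ht), sig, Finset.mul_sum]
  refine Finset.sum_lt_sum (fun μ hμ => ?_) ⟨μ₀, hμ₀, ?_⟩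
  · rw [mul_comm (t ^ a)]
    rcases lt_trichotomy (c μ) 0 with hc | hc | hc
    · exact mul_le_mul_of_nonpos_left (Real.rpow_le_rpow_of_exponent_le ht.le (hneg μ hμ hc))
        (mul_neg_of_neg_of_pos hc (hmon μ)).le
    · simp [hc]
    · exact mul_le_mul_of_nonneg_left (Real.rpow_le_rpow_of_exponent_le ht.le (hpos μ hμ hc))
        (mul_pos hc (hmon μ)).le
  · rw [mul_comm (t ^ a)]
    exact mul_lt_mul_of_pos_left (Real.rpow_lt_rpow_of_exponent_lt ht hlt)
      (mul_pos hc₀ (hmon μ₀))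

theorem mem_closure_negSet {v μ₀ x : Fin n → ℝ} {a : ℝ}
    (hpos : ∀ μ ∈ S, 0 < c μ → v ⬝ᵥ μ ≤ a) (hneg : ∀ μ ∈ S, c μ < 0 → a ≤ v ⬝ᵥ μ)
    (hμ₀ : μ₀ ∈ S) (hc₀ : 0 < c μ₀) (hlt : v ⬝ᵥ μ₀ < a)
    (hx : ∀ i, 0 < x i) (hfx : sig S c x ≤ 0) : x ∈ closure (negSet S c) := by
  have hcurve : Filter.Tendsto (fun t : ℝ => fun i => x i * t ^ v i) (nhdsWithin 1 (Set.Ioi 1))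
      (nhds x) := by
    have h : ContinuousAt (fun t : ℝ => fun i => x i * t ^ v i) 1 := by
      fun_prop (disch := exact Or.inl one_ne_zero)
    simpa using h.tendsto.mono_left nhdsWithin_le_nhds
  refine mem_closure_of_tendsto hcurve (eventually_nhdsWithin_of_forall fun t (ht : 1 < t) => ?_)
  have ht₀ : 0 < t := zero_lt_one.trans ht
  refine ⟨fun i => mul_pos (hx i) (Real.rpow_pos_of_pos ht₀ _), ?_⟩
  calc sig S c (fun i => x i * t ^ v i) < t ^ a * sig S c x :=
        sig_mul_rpow_lt_s17 hpos hneg hμ₀ hc₀ hlt hx ht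
    _ ≤ 0 := mul_nonpos_of_nonneg_of_nonpos (Real.rpow_nonneg ht₀.le a) hfx

end Signomial

/-- Proposition 3.9(ii): if all negative exponent vectors lie on a proper face of the Newton
polytope, then `f` satisfies the closure property: the closure of `f⁻¹(ℝ_{<0})` in the
positive orthant equals `f⁻¹(ℝ_{≤0})`. -/
theorem stmt_17 (n : ℕ) (S : Finset (Fin n → ℝ)) (c : (Fin n → ℝ) → ℝ)
    (hc : ∀ μ ∈ S, c μ ≠ 0)
    (F : Set (Fin n → ℝ))
    (hF : ∃ v : Fin n → ℝ, F = faceOf S v)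
    (hproper : F ≠ convexHull ℝ (↑S : Set (Fin n → ℝ)))
    (hneg : sigNegSet S c ⊆ F) :
    closure (negSet S c) ∩ {x : Fin n → ℝ | ∀ i, 0 < x i} =
      {x : Fin n → ℝ | (∀ i, 0 < x i) ∧ sig S c x ≤ 0} := by
  obtain ⟨v, rfl⟩ := hF
  have hS := nonempty_of_faceOf_ne_convexHull hproper
  obtain ⟨μ₀, hμ₀, hlt⟩ := exists_dotProduct_lt_sup'_of_faceOf_ne_convexHull hS hproper
  have hnegFace : ∀ μ ∈ S, c μ < 0 → v ⬝ᵥ μ = S.sup' hS (v ⬝ᵥ ·) := fun μ hμ hcμ =>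
    dotProduct_eq_sup'_of_mem_faceOf hS (hneg ⟨hμ, hcμ⟩)
  have hc₀ : 0 < c μ₀ :=
    (hc μ₀ hμ₀).lt_or_gt.resolve_left fun h => hlt.ne (hnegFace μ₀ hμ₀ h)
  refine (closure_negSet_inter_subset S c).antisymm fun x ⟨hx, hfx⟩ => ⟨?_, hx⟩
  exact mem_closure_negSet (fun μ hμ _ => S.le_sup' (v ⬝ᵥ ·) hμ)
    (fun μ hμ hcμ => (hnegFace μ hμ hcμ).ge) hμ₀ hc₀ hlt hx hfx
end
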